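/- arXiv:1612.06480 — 2 statements merged into one kernel-verified Lean document; each statement's English description precedes it below -/
import Mathlib

section
/- Let m ∈ ℕ and s ∈ ℂ with Re(s) > 2 + m/2, and define Z_{ρ_m}(k, w) := ∏_{l=0}^{m} Z(m − 2l + k, w − m/2 + l) for k ∈ ℤ. Then Z_{ρ_m}(−2, s + 1) and Z(−(m + 2), s + m/2 + 1) are nonzero, and Z_{ρ_m}(0, s) / Z_{ρ_m}(−2, s + 1) = Z(m, s − m/2) / Z(−(m + 2), s + m/2 + 1). -/
/-- `R(σ_k, s) = ∏_{i ∈ I} (1 − e^{i(k/2)θ_i} e^{−s ℓ_i})`. -/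
noncomputable def Rz {I : Type*} (ℓ θ : I → ℝ) (k : ℤ) (s : ℂ) : ℂ :=
  ∏' i : I, (1 - Complex.exp (Complex.I * ((k : ℂ) / 2) * (θ i : ℂ))
    * Complex.exp (-s * (ℓ i : ℂ)))

/-- Selberg zeta function
`Z(σ_k, s) = ∏_{i ∈ I} ∏_{p,q ≥ 0} (1 − e^{i(k/2)θ_i} e^{−p(ℓ_i+iθ_i)} e^{−q(ℓ_i−iθ_i)} e^{−s ℓ_i})`. -/
noncomputable def Zs {I : Type*} (ℓ θ : I → ℝ) (k : ℤ) (s : ℂ) : ℂ :=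
  ∏' x : I × ℕ × ℕ,
    (1 - Complex.exp (Complex.I * ((k : ℂ) / 2) * (θ x.1 : ℂ))
       * Complex.exp (-(x.2.1 : ℂ) * ((ℓ x.1 : ℂ) + Complex.I * (θ x.1 : ℂ)))
       * Complex.exp (-(x.2.2 : ℂ) * ((ℓ x.1 : ℂ) - Complex.I * (θ x.1 : ℂ)))
       * Complex.exp (-s * (ℓ x.1 : ℂ)))

/-!
Each factor of `Z(k, w)` has the form `1 - a` with `‖a‖ = e^{-(p + q + Re w) ℓ}`. Summability of
`e^{-δ ℓ}` forces `ℓ` to be bounded away from `0`, so these norms are summable over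
`I × ℕ × ℕ` as soon as `δ ≤ Re w`, and an absolutely convergent product of nonzero factors is
nonzero. Every argument `s - m/2 + l` with `0 ≤ l ≤ m + 1` has real part `> 2 > δ`, and the two
products defining `Z_{ρ_m}(0, s)` and `Z_{ρ_m}(-2, s + 1)` are the same product shifted by one
index, so their quotient telescopes to its first factor over its last one.
-/

open Finset

lemma Finset.prod_range_succ_div_prod_range_succ_shift {K : Type*} [Field K] (f : ℕ → K) (n : ℕ)
    (hf : ∀ i ∈ range (n + 1), f (i + 1) ≠ 0) :
    (∏ i ∈ range (n + 1), f i) / ∏ i ∈ range (n + 1), f (i + 1) = f 0 / f (n + 1) := by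
  rw [div_eq_div_iff (prod_ne_zero_iff.2 hf) (hf n (self_mem_range_succ n)),
    ← prod_range_succ f (n + 1), prod_range_succ' f (n + 1)]
  ring

section LengthSpectrum

variable {I : Type*} {ℓ : I → ℝ} {δ : ℝ}

lemma exists_pos_le_of_summable_exp_neg_mul (hℓ : ∀ i, 0 < ℓ i)
    (hsum : Summable fun i => Real.exp (-δ * ℓ i)) : ∃ c > 0, ∀ i, c ≤ ℓ i := by
  set ε := min 1 (Real.exp (-δ))
  have hshort : {i | ℓ i < 1} ⊆ {i | ε ≤ Real.exp (-δ * ℓ i)} := by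
    intro i (hi : ℓ i < 1)
    -- for `0 < ℓ i < 1`, `-δ ℓ i` lies between `0` and `-δ`
    have : min 0 (-δ) ≤ -δ * ℓ i := by
      rcases le_total δ 0 with h | h
      · exact (min_le_left _ _).trans (by nlinarith [hℓ i])
      · exact (min_le_right _ _).trans (by nlinarith [hℓ i])
    simpa [ε, Real.exp_monotone.map_min] using Real.exp_monotone this
  have hfin : {i | ℓ i < 1}.Finite := by
    refine Set.Finite.subset ?_ hshort
    have := hsum.tendsto_cofinite_zero.eventually (gt_mem_nhds (by positivity : 0 < ε))
    simpa [Filter.eventually_cofinite, not_lt] using this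
  obtain ⟨c, hc, hmin⟩ := Set.exists_min_image (insert 1 (ℓ '' {i | ℓ i < 1})) id
    ((hfin.image ℓ).insert 1) (Set.insert_nonempty _ _)
  refine ⟨c, ?_, fun i => ?_⟩
  · rcases hc with rfl | ⟨j, -, rfl⟩
    exacts [one_pos, hℓ j]
  · rcases lt_or_ge (ℓ i) 1 with hi | hi
    · exact hmin _ (Set.mem_insert_of_mem _ ⟨i, hi, rfl⟩)
    · exact (hmin 1 (Set.mem_insert _ _)).trans hi

lemma summable_exp_neg_add_mul (hℓ : ∀ i, 0 < ℓ i)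
    (hsum : Summable fun i => Real.exp (-δ * ℓ i)) {t : ℝ} (ht : δ ≤ t) :
    Summable fun x : I × ℕ × ℕ => Real.exp (-((x.2.1 + x.2.2 + t) * ℓ x.1)) := by
  obtain ⟨c, hc, hcℓ⟩ := exists_pos_le_of_summable_exp_neg_mul hℓ hsum
  have hgeom : Summable fun p : ℕ => Real.exp (-c) ^ p :=
    summable_geometric_of_lt_one (Real.exp_nonneg _) (Real.exp_lt_one_iff.2 (neg_lt_zero.2 hc))
  have hmajor := hsum.mul_of_nonneg (hgeom.mul_of_nonneg hgeom (fun _ => by positivity)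
    (fun _ => by positivity)) (fun _ => by positivity) (fun _ => by positivity)
  refine hmajor.of_nonneg_of_le (fun _ => by positivity) fun ⟨i, p, q⟩ => ?_
  simp only [← Real.exp_nat_mul, ← Real.exp_add, Real.exp_le_exp]
  nlinarith [hℓ i, hcℓ i, mul_le_mul_of_nonneg_left (hcℓ i) (Nat.cast_nonneg (α := ℝ) p),
    mul_le_mul_of_nonneg_left (hcℓ i) (Nat.cast_nonneg (α := ℝ) q)]

end LengthSpectrum

section SelbergZeta

variable {I : Type*} (ℓ θ : I → ℝ) (k : ℤ) (w : ℂ)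

noncomputable def selbergTerm (x : I × ℕ × ℕ) : ℂ :=
  Complex.exp (Complex.I * ((k : ℂ) / 2) * (θ x.1 : ℂ))
    * Complex.exp (-(x.2.1 : ℂ) * ((ℓ x.1 : ℂ) + Complex.I * (θ x.1 : ℂ)))
    * Complex.exp (-(x.2.2 : ℂ) * ((ℓ x.1 : ℂ) - Complex.I * (θ x.1 : ℂ)))
    * Complex.exp (-w * (ℓ x.1 : ℂ))

lemma Zs_eq_tprod_one_sub_selbergTerm : Zs ℓ θ k w = ∏' x, (1 - selbergTerm ℓ θ k w x) := rfl

lemma norm_selbergTerm (x : I × ℕ × ℕ) :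
    ‖selbergTerm ℓ θ k w x‖ = Real.exp (-((x.2.1 + x.2.2 + w.re) * ℓ x.1)) := by
  simp only [selbergTerm, norm_mul, Complex.norm_exp, ← Real.exp_add]
  congr 1
  simp
  ring

variable {ℓ} {δ : ℝ}

lemma Zs_ne_zero (hℓ : ∀ i, 0 < ℓ i) (hsum : Summable fun i => Real.exp (-δ * ℓ i))
    (hw₀ : 0 < w.re) (hw : δ ≤ w.re) : Zs ℓ θ k w ≠ 0 := by
  have hterm : ∀ x, ‖selbergTerm ℓ θ k w x‖ < 1 := fun x => by
    rw [norm_selbergTerm, Real.exp_lt_one_iff, neg_lt_zero]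
    have := hℓ x.1
    positivity
  have hsummable : Summable fun x => ‖-selbergTerm ℓ θ k w x‖ := by
    simpa only [norm_neg, norm_selbergTerm] using summable_exp_neg_add_mul hℓ hsum hw
  have hfactor : ∀ x, 1 + -selbergTerm ℓ θ k w x ≠ 0 := fun x => by
    rw [← sub_eq_add_neg, sub_ne_zero]
    exact fun h => by simpa [← h] using hterm x
  rw [Zs_eq_tprod_one_sub_selbergTerm]
  simpa only [← sub_eq_add_neg] using tprod_one_add_ne_zero_of_summable hfactor hsummable

end SelbergZeta

theorem statement6_general {I : Type*} (ℓ θ : I → ℝ)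
    (hℓ : ∀ i, 0 < ℓ i) (δ : ℝ) (hδ : δ < 2)
    (hsum : Summable fun i => Real.exp (-δ * ℓ i))
    (m : ℕ) (s : ℂ) (hs : 2 + (m : ℝ) / 2 < s.re)
    (Zρ : ℤ → ℂ → ℂ)
    (hZρ : ∀ (k : ℤ) (w : ℂ), Zρ k w =
      ∏ l ∈ Finset.range (m + 1),
        Zs ℓ θ ((m : ℤ) - 2 * (l : ℤ) + k) (w - (m : ℂ) / 2 + (l : ℂ))) :
    Zρ (-2) (s + 1) ≠ 0 ∧
    Zs ℓ θ (-((m : ℤ) + 2)) (s + (m : ℂ) / 2 + 1) ≠ 0 ∧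
    Zρ 0 s / Zρ (-2) (s + 1) =
      Zs ℓ θ (m : ℤ) (s - (m : ℂ) / 2) / Zs ℓ θ (-((m : ℤ) + 2)) (s + (m : ℂ) / 2 + 1) := by
  set A : ℕ → ℂ := fun l => Zs ℓ θ ((m : ℤ) - 2 * (l : ℤ)) (s - (m : ℂ) / 2 + (l : ℂ))
  have hA : ∀ l, A l ≠ 0 := fun l => by
    have hre : 2 < (s - (m : ℂ) / 2 + (l : ℂ)).re := by
      simp only [Complex.add_re, Complex.sub_re, Complex.div_ofNat_re, Complex.natCast_re]
      linarith [(Nat.cast_nonneg l : (0 : ℝ) ≤ l)]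
    exact Zs_ne_zero θ _ _ hℓ hsum (by linarith) (by linarith)
  have hZρ₀ : Zρ 0 s = ∏ l ∈ range (m + 1), A l := by
    simp only [hZρ, add_zero, A]
  have hZρ₂ : Zρ (-2) (s + 1) = ∏ l ∈ range (m + 1), A (l + 1) := by
    simp only [hZρ, A]
    refine prod_congr rfl fun l _ => ?_
    congr 1 <;> push_cast <;> ring
  have hA₀ : Zs ℓ θ m (s - m / 2) = A 0 := by simp [A]
  have hAlast : Zs ℓ θ (-(m + 2)) (s + m / 2 + 1) = A (m + 1) := by
    simp only [A]
    congr 1 <;> push_cast <;> ring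
  refine ⟨hZρ₂ ▸ prod_ne_zero_iff.2 fun l _ => hA _, hAlast ▸ hA _, ?_⟩
  rw [hZρ₀, hZρ₂, hA₀, hAlast]
  exact prod_range_succ_div_prod_range_succ_shift A m fun l _ => hA _

/-- `Z_{ρ_m}(σ_0, s) / Z_{ρ_m}(σ_{−2}, s+1) = Z(m, s−m/2) / Z(−(m+2), s+m/2+1)`,
where `Z_{ρ_m}(σ_k, w) = ∏_{l=0}^{m} Z(m−2l+k, w−m/2+l)`. -/
theorem statement6 {I : Type*} [Countable I] (ℓ θ : I → ℝ)
    (hℓ : ∀ i, 0 < ℓ i) (δ : ℝ) (hδ : δ < 2)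
    (hsum : Summable fun i => Real.exp (-δ * ℓ i))
    (m : ℕ) (s : ℂ) (hs : 2 + (m : ℝ) / 2 < s.re)
    (Zρ : ℤ → ℂ → ℂ)
    (hZρ : ∀ (k : ℤ) (w : ℂ), Zρ k w =
      ∏ l ∈ Finset.range (m + 1),
        Zs ℓ θ ((m : ℤ) - 2 * (l : ℤ) + k) (w - (m : ℂ) / 2 + (l : ℂ))) :
    Zρ (-2) (s + 1) ≠ 0 ∧
    Zs ℓ θ (-((m : ℤ) + 2)) (s + (m : ℂ) / 2 + 1) ≠ 0 ∧
    Zρ 0 s / Zρ (-2) (s + 1) =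
      Zs ℓ θ (m : ℤ) (s - (m : ℂ) / 2) / Zs ℓ θ (-((m : ℤ) + 2)) (s + (m : ℂ) / 2 + 1) :=
  statement6_general ℓ θ hℓ δ hδ hsum m s hs Zρ hZρ
end

section
/- Let n ∈ ℕ with n ≥ 1 and s ∈ ℂ with Re(s) > n + 1. Let F_n(s) = ∏_{i ∈ I} ∏_{k ≥ n} (1 − exp(−k(ℓ i + i·θ i))·exp(−s·ℓ i)) and let R_{ρ_{2(n−1)}}(s) = ∏_{l=0}^{2(n−1)} R(2(n−1) − 2l, s − (n−1) + l). Then Z(−2(n−1), s + n + 1) and Z(2n, s − n + 2) are nonzero, and F_n(s)² · R_{ρ_{2(n−1)}}(s) = ( Z(2(n−1), s − n + 1) · Z(−2n, s + n) ) / ( Z(−2(n−1), s + n + 1) · Z(2n, s − n + 2) ). -/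
open Filter

def Equiv.sumProdNat (α : Type*) : α ⊕ α × ℕ ≃ α × ℕ where
  toFun := Sum.elim (fun a => (a, 0)) fun x => (x.1, x.2 + 1)
  invFun
    | (a, 0) => .inl a
    | (a, p + 1) => .inr (a, p)
  left_inv := by rintro (a | ⟨a, p⟩) <;> rfl
  right_inv := by rintro ⟨a, _ | p⟩ <;> rfl

section NormedRing

variable {ι R : Type*} [NormedCommRing R] [NormOneClass R] [CompleteSpace R]

lemma multipliable_one_sub_of_summable {f : ι → R} (hf : Summable (‖f ·‖)) :
    Multipliable fun i => 1 - f i := by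
  simpa [sub_eq_add_neg] using multipliable_one_add_of_summable (f := fun i => -f i) (by simpa)

lemma tprod_one_sub_ne_zero_of_summable [NormMulClass R] {f : ι → R} (hf1 : ∀ i, ‖f i‖ < 1)
    (hf : Summable (‖f ·‖)) : ∏' i, (1 - f i) ≠ 0 := by
  have h : ∀ i, 1 + -f i ≠ 0 := fun i hi => by
    rw [← sub_eq_add_neg, sub_eq_zero] at hi
    simpa [← hi] using hf1 i
  simpa [sub_eq_add_neg] using tprod_one_add_ne_zero_of_summable h (by simpa)

lemma tprod_one_sub_prod_nat {α : Type*} {f : α × ℕ → R} (hf : Summable (‖f ·‖)) :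
    ∏' x, (1 - f x) = (∏' a, (1 - f (a, 0))) * ∏' x : α × ℕ, (1 - f (x.1, x.2 + 1)) := by
  rw [← (Equiv.sumProdNat α).tprod_eq, Multipliable.tprod_sum]
  · rfl
  all_goals
    refine multipliable_one_sub_of_summable (hf.comp_injective ?_)
    intro x y h
    simpa using (Equiv.sumProdNat α).injective h

end NormedRing

section Lengths

variable {I : Type*} {ℓ : I → ℝ} {δ : ℝ}

lemma tendsto_cofinite_atTop_of_summable_exp (hδ : 0 < δ)
    (hsum : Summable fun i => Real.exp (-δ * ℓ i)) : Tendsto ℓ cofinite atTop := by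
  have h : Tendsto (fun i => -δ * ℓ i) cofinite atBot :=
    Real.tendsto_exp_comp_nhds_zero.mp hsum.tendsto_cofinite_zero
  simpa [← mul_assoc, hδ.ne'] using h.const_mul_atBot_of_neg (neg_lt_zero.mpr (inv_pos.mpr hδ))

lemma exists_pos_forall_le_of_summable_exp (hℓ : ∀ i, 0 < ℓ i) (hδ : 0 < δ)
    (hsum : Summable fun i => Real.exp (-δ * ℓ i)) : ∃ c > 0, ∀ i, c ≤ ℓ i := by
  cases isEmpty_or_nonempty I
  · exact ⟨1, one_pos, isEmptyElim⟩
  · obtain ⟨i₀, hi₀⟩ := (tendsto_cofinite_atTop_of_summable_exp hδ hsum).exists_forall_le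
    exact ⟨ℓ i₀, hℓ i₀, hi₀⟩

end Lengths

section Selberg

variable {I : Type*}

noncomputable def zetaTerm (ℓ θ : I → ℝ) (k : ℤ) (s : ℂ) (x : I × ℕ × ℕ) : ℂ :=
  Complex.exp (Complex.I * ((k : ℂ) / 2) * (θ x.1 : ℂ))
    * Complex.exp (-(x.2.1 : ℂ) * ((ℓ x.1 : ℂ) + Complex.I * (θ x.1 : ℂ)))
    * Complex.exp (-(x.2.2 : ℂ) * ((ℓ x.1 : ℂ) - Complex.I * (θ x.1 : ℂ)))
    * Complex.exp (-s * (ℓ x.1 : ℂ))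

noncomputable def halfZs (ℓ θ : I → ℝ) (k : ℤ) (s : ℂ) : ℂ :=
  ∏' y : I × ℕ, (1 - zetaTerm ℓ θ k s (y.1, y.2, 0))

variable {ℓ θ : I → ℝ}

lemma Zs_eq_tprod (k : ℤ) (s : ℂ) : Zs ℓ θ k s = ∏' x, (1 - zetaTerm ℓ θ k s x) := rfl

lemma norm_zetaTerm (k : ℤ) (s : ℂ) (x : I × ℕ × ℕ) :
    ‖zetaTerm ℓ θ k s x‖ = Real.exp (-(s.re + x.2.1 + x.2.2) * ℓ x.1) := by
  simp only [zetaTerm, ← Complex.exp_add, Complex.norm_exp, Complex.add_re, Complex.sub_re,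
    Complex.mul_re, Complex.neg_re, Complex.mul_im, Complex.add_im, Complex.sub_im,
    Complex.neg_im, Complex.I_re, Complex.I_im, Complex.div_ofNat_re, Complex.div_ofNat_im,
    Complex.intCast_re, Complex.intCast_im, Complex.natCast_re, Complex.natCast_im,
    Complex.ofReal_re, Complex.ofReal_im]
  congr 1
  ring

lemma zetaTerm_p_succ (k : ℤ) (s : ℂ) (i : I) (p q : ℕ) :
    zetaTerm ℓ θ k s (i, p + 1, q) = zetaTerm ℓ θ (k - 2) (s + 1) (i, p, q) := by
  simp only [zetaTerm, ← Complex.exp_add]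
  congr 1
  push_cast
  ring

lemma zetaTerm_q_succ (k : ℤ) (s : ℂ) (i : I) (p q : ℕ) :
    zetaTerm ℓ θ k s (i, p, q + 1) = zetaTerm ℓ θ (k + 2) (s + 1) (i, p, q) := by
  simp only [zetaTerm, ← Complex.exp_add]
  congr 1
  push_cast
  ring

lemma zetaTerm_zero_zero (k : ℤ) (s : ℂ) (i : I) :
    zetaTerm ℓ θ k s (i, 0, 0) =
      Complex.exp (Complex.I * ((k : ℂ) / 2) * (θ i : ℂ)) * Complex.exp (-s * (ℓ i : ℂ)) := by
  simp [zetaTerm]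

lemma zetaTerm_neg_two_mul (n : ℕ) (s : ℂ) (i : I) (p : ℕ) :
    zetaTerm ℓ θ (-2 * n) (s + n) (i, p, 0) =
      Complex.exp (-((p + n : ℕ) : ℂ) * ((ℓ i : ℂ) + Complex.I * (θ i : ℂ)))
        * Complex.exp (-s * (ℓ i : ℂ)) := by
  simp only [zetaTerm, ← Complex.exp_add]
  congr 1
  push_cast
  ring

lemma summable_norm_zetaTerm {δ : ℝ} (hℓ : ∀ i, 0 < ℓ i) (hδ : 0 < δ)
    (hsum : Summable fun i => Real.exp (-δ * ℓ i)) (k : ℤ) {s : ℂ} (hs : δ ≤ s.re) :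
    Summable (‖zetaTerm ℓ θ k s ·‖) := by
  obtain ⟨c, hc, hcℓ⟩ := exists_pos_forall_le_of_summable_exp hℓ hδ hsum
  have hgeom : Summable fun p : ℕ => Real.exp (-c) ^ p :=
    summable_geometric_of_lt_one (Real.exp_nonneg _) (Real.exp_lt_one_iff.mpr (by linarith))
  have hmajor := hsum.mul_of_nonneg (hgeom.mul_of_nonneg hgeom (fun _ => by positivity)
    (fun _ => by positivity)) (fun _ => by positivity) (fun _ => by positivity)
  refine hmajor.of_nonneg_of_le (fun _ => norm_nonneg _) fun ⟨i, p, q⟩ => ?_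
  rw [norm_zetaTerm, ← Real.exp_nat_mul, ← Real.exp_nat_mul, ← Real.exp_add, ← Real.exp_add]
  refine Real.exp_le_exp.mpr ?_
  have hp : (p : ℝ) * c ≤ p * ℓ i := mul_le_mul_of_nonneg_left (hcℓ i) p.cast_nonneg
  have hq : (q : ℝ) * c ≤ q * ℓ i := mul_le_mul_of_nonneg_left (hcℓ i) q.cast_nonneg
  have hδs : δ * ℓ i ≤ s.re * ℓ i := mul_le_mul_of_nonneg_right hs (hℓ i).le
  nlinarith

lemma Zs_ne_zero_s10 (hℓ : ∀ i, 0 < ℓ i) {k : ℤ} {s : ℂ} (hs : 0 < s.re)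
    (h : Summable (‖zetaTerm ℓ θ k s ·‖)) : Zs ℓ θ k s ≠ 0 := by
  rw [Zs_eq_tprod]
  refine tprod_one_sub_ne_zero_of_summable (fun ⟨i, p, q⟩ => ?_) h
  rw [norm_zetaTerm, Real.exp_lt_one_iff, neg_mul, neg_lt_zero]
  have := hℓ i
  positivity

lemma Zs_eq_halfZs_mul {k : ℤ} {s : ℂ} (h : Summable (‖zetaTerm ℓ θ k s ·‖)) :
    Zs ℓ θ k s = halfZs ℓ θ k s * Zs ℓ θ (k + 2) (s + 1) := by
  let e := Equiv.prodAssoc I ℕ ℕ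
  have he : Summable fun y => ‖zetaTerm ℓ θ k s (e y)‖ := e.summable_iff.mpr h
  rw [Zs_eq_tprod, ← e.tprod_eq (fun x => 1 - zetaTerm ℓ θ k s x), tprod_one_sub_prod_nat he,
    Zs_eq_tprod, ← e.tprod_eq (fun x => 1 - zetaTerm ℓ θ (k + 2) (s + 1) x)]
  simp [e, halfZs, zetaTerm_q_succ]

lemma halfZs_eq_Rz_mul {k : ℤ} {s : ℂ} (h : Summable (‖zetaTerm ℓ θ k s ·‖)) :
    halfZs ℓ θ k s = Rz ℓ θ k s * halfZs ℓ θ (k - 2) (s + 1) := by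
  have hinj : Function.Injective fun y : I × ℕ => (y.1, y.2, 0) := fun y y' h => by
    simpa [Prod.ext_iff] using h
  rw [halfZs, tprod_one_sub_prod_nat (h.comp_injective hinj)]
  simp [Rz, halfZs, zetaTerm_p_succ, zetaTerm_zero_zero]

lemma halfZs_eq_prod_Rz_mul {δ : ℝ} (hℓ : ∀ i, 0 < ℓ i) (hδ : 0 < δ)
    (hsum : Summable fun i => Real.exp (-δ * ℓ i)) (k : ℤ) {s : ℂ} (hs : δ ≤ s.re) (m : ℕ) :
    halfZs ℓ θ k s = (∏ l ∈ Finset.range m, Rz ℓ θ (k - 2 * l) (s + l))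
      * halfZs ℓ θ (k - 2 * m) (s + m) := by
  induction m with
  | zero => simp
  | succ m ih =>
    have hsm : δ ≤ (s + m).re := by simpa using le_add_of_le_of_nonneg hs m.cast_nonneg
    rw [ih, halfZs_eq_Rz_mul (summable_norm_zetaTerm hℓ hδ hsum _ hsm), Finset.prod_range_succ]
    push_cast
    ring_nf

lemma halfZs_neg_two_mul (n : ℕ) (s : ℂ) :
    halfZs ℓ θ (-2 * n) (s + n) =
      ∏' x : I × {k : ℕ // n ≤ k},
        (1 - Complex.exp (-((x.2 : ℕ) : ℂ) * ((ℓ x.1 : ℂ) + Complex.I * (θ x.1 : ℂ)))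
           * Complex.exp (-s * (ℓ x.1 : ℂ))) := by
  let e : ℕ ≃ {k : ℕ // n ≤ k} :=
    { toFun p := ⟨p + n, le_add_self⟩
      invFun k := k - n
      left_inv p := by simp
      right_inv k := Subtype.ext (Nat.sub_add_cancel k.2) }
  rw [← ((Equiv.refl I).prodCongr e).tprod_eq, halfZs]
  exact tprod_congr fun y => by rw [zetaTerm_neg_two_mul]; rfl

lemma Zs_mul_Zs_eq_halfZs_sq_mul {δ : ℝ} (hℓ : ∀ i, 0 < ℓ i) (hδ : 0 < δ)
    (hsum : Summable fun i => Real.exp (-δ * ℓ i)) (k : ℤ) {s : ℂ} (hs : δ ≤ s.re) (m : ℕ) :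
    Zs ℓ θ k s * Zs ℓ θ (k - 2 * m) (s + m) =
      halfZs ℓ θ (k - 2 * m) (s + m) ^ 2 * (∏ l ∈ Finset.range m, Rz ℓ θ (k - 2 * l) (s + l))
        * (Zs ℓ θ (k - 2 * m + 2) (s + m + 1) * Zs ℓ θ (k + 2) (s + 1)) := by
  have hsm : δ ≤ (s + m).re := by simpa using le_add_of_le_of_nonneg hs m.cast_nonneg
  rw [Zs_eq_halfZs_mul (summable_norm_zetaTerm hℓ hδ hsum k hs),
    Zs_eq_halfZs_mul (summable_norm_zetaTerm hℓ hδ hsum _ hsm),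
    halfZs_eq_prod_Rz_mul hℓ hδ hsum k hs m]
  ring

end Selberg

theorem statement10_general {I : Type*} (ℓ θ : I → ℝ)
    (hℓ : ∀ i, 0 < ℓ i) (δ : ℝ) (hδ : δ < 2)
    (hsum : Summable fun i => Real.exp (-δ * ℓ i))
    (n : ℕ) (hn : 1 ≤ n) (s : ℂ) (hs : (n : ℝ) + 1 < s.re) :
    Zs ℓ θ (-2 * ((n : ℤ) - 1)) (s + (n : ℂ) + 1) ≠ 0 ∧
    Zs ℓ θ (2 * (n : ℤ)) (s - (n : ℂ) + 2) ≠ 0 ∧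
    (∏' x : I × {k : ℕ // n ≤ k},
        (1 - Complex.exp (-((x.2 : ℕ) : ℂ) * ((ℓ x.1 : ℂ) + Complex.I * (θ x.1 : ℂ)))
           * Complex.exp (-s * (ℓ x.1 : ℂ)))) ^ 2 *
      (∏ l ∈ Finset.range (2 * (n - 1) + 1),
        Rz ℓ θ (2 * ((n : ℤ) - 1) - 2 * (l : ℤ)) (s - ((n : ℂ) - 1) + (l : ℂ))) =
      (Zs ℓ θ (2 * ((n : ℤ) - 1)) (s - (n : ℂ) + 1) *
          Zs ℓ θ (-2 * (n : ℤ)) (s + (n : ℂ))) /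
      (Zs ℓ θ (-2 * ((n : ℤ) - 1)) (s + (n : ℂ) + 1) *
          Zs ℓ θ (2 * (n : ℤ)) (s - (n : ℂ) + 2)) := by
  have hδ' : 0 < max δ 1 := lt_max_of_lt_right one_pos
  have hsum' : Summable fun i => Real.exp (-max δ 1 * ℓ i) :=
    hsum.of_nonneg_of_le (fun _ => Real.exp_nonneg _) fun i =>
      Real.exp_le_exp.mpr (by nlinarith [hℓ i, le_max_left δ 1])
  have hle {t : ℂ} (ht : 2 ≤ t.re) : max δ 1 ≤ t.re := max_le (by linarith) (by linarith)
  have hne (k : ℤ) {t : ℂ} (ht : 2 ≤ t.re) : Zs ℓ θ k t ≠ 0 :=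
    Zs_ne_zero_s10 hℓ (by linarith) (summable_norm_zetaTerm hℓ hδ' hsum' k (hle ht))
  have hn' : (1 : ℝ) ≤ n := by exact_mod_cast hn
  have hne₁ := hne (-2 * ((n : ℤ) - 1)) (t := s + n + 1) (by simp; linarith)
  have hne₂ := hne (2 * n) (t := s - n + 2) (by simp; linarith)
  refine ⟨hne₁, hne₂, ?_⟩
  have key := Zs_mul_Zs_eq_halfZs_sq_mul (θ := θ) hℓ hδ' hsum' (2 * ((n : ℤ) - 1))
    (s := s - (n - 1)) (hle (by simp; linarith)) (2 * (n - 1) + 1)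
  have hk : 2 * ((n : ℤ) - 1) - 2 * ((2 * (n - 1) + 1 : ℕ) : ℤ) = -2 * n := by omega
  have ht : s - ((n : ℂ) - 1) + ((2 * (n - 1) + 1 : ℕ) : ℂ) = s + n := by
    push_cast [Nat.cast_sub hn]
    ring
  rw [hk, ht] at key
  rw [eq_div_iff (mul_ne_zero hne₁ hne₂), ← halfZs_neg_two_mul]
  convert key.symm using 3 <;> ring_nf

/-- `F_n(s)² R_{ρ_{2(n−1)}}(s)` as a ratio of four Selberg zeta values. -/
theorem statement10 {I : Type*} [Countable I] (ℓ θ : I → ℝ)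
    (hℓ : ∀ i, 0 < ℓ i) (δ : ℝ) (hδ : δ < 2)
    (hsum : Summable fun i => Real.exp (-δ * ℓ i))
    (n : ℕ) (hn : 1 ≤ n) (s : ℂ) (hs : (n : ℝ) + 1 < s.re) :
    Zs ℓ θ (-2 * ((n : ℤ) - 1)) (s + (n : ℂ) + 1) ≠ 0 ∧
    Zs ℓ θ (2 * (n : ℤ)) (s - (n : ℂ) + 2) ≠ 0 ∧
    (∏' x : I × {k : ℕ // n ≤ k},
        (1 - Complex.exp (-((x.2 : ℕ) : ℂ) * ((ℓ x.1 : ℂ) + Complex.I * (θ x.1 : ℂ)))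
           * Complex.exp (-s * (ℓ x.1 : ℂ)))) ^ 2 *
      (∏ l ∈ Finset.range (2 * (n - 1) + 1),
        Rz ℓ θ (2 * ((n : ℤ) - 1) - 2 * (l : ℤ)) (s - ((n : ℂ) - 1) + (l : ℂ))) =
      (Zs ℓ θ (2 * ((n : ℤ) - 1)) (s - (n : ℂ) + 1) *
          Zs ℓ θ (-2 * (n : ℤ)) (s + (n : ℂ))) /
      (Zs ℓ θ (-2 * ((n : ℤ) - 1)) (s + (n : ℂ) + 1) *
          Zs ℓ θ (2 * (n : ℤ)) (s - (n : ℂ) + 2)) :=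
  statement10_general ℓ θ hℓ δ hδ hsum n hn s hs
end
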